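/- arXiv:2401.17785 — 4 statements merged into one kernel-verified Lean document; each statement's English description precedes it below -/
import Mathlib

section
/- Let $L > 1$ be a real number and $y \in \mathbb{R}^n$ with $|y| > 10e$. Then there is a constant $C_L$ depending only on $L$ (and $n$) such that for every $x \in \mathbb{R}^n$, $\sum_{1 \le k \le \ln(e+|y|)} (1 + |x + 2^{-k} y|)^{-L} \le C_L$, where the sum is over integers $k$ with $1 \le k \le \ln(e+|y|)$. -/
open Real Finset

/-- uniform bound for `∑_{1 ≤ k ≤ ln(e+|y|)} (1 + |x + 2^{-k} y|)^{-L}`. -/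
theorem sum_shifted_weights_bounded (n : ℕ) (L : ℝ) (hL : 1 < L) :
    ∃ C : ℝ, 0 < C ∧ ∀ y : EuclideanSpace ℝ (Fin n), ‖y‖ > 10 * Real.exp 1 →
      ∀ x : EuclideanSpace ℝ (Fin n),
        ∑ k ∈ Finset.Icc 1 ⌊Real.log (Real.exp 1 + ‖y‖)⌋₊,
          (1 + ‖x + (2 : ℝ) ^ (-(k : ℤ)) • y‖) ^ (-L) ≤ C := by
  refine ⟨1 + 2 * (22/5 : ℝ) ^ L, by positivity, ?_⟩
  intro y hy x
  set t := ‖y‖ with ht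
  set K := ⌊Real.log (Real.exp 1 + t)⌋₊ with hKdef
  set d : ℕ → ℝ := fun k => ‖x + (2:ℝ)^(-(k:ℤ)) • y‖ with hd
  by_cases hne : (Finset.Icc 1 K).Nonempty
  · obtain ⟨k0, hk0mem, hk0min⟩ := Finset.exists_min_image (Finset.Icc 1 K) d hne
    have ht0 : (0:ℝ) < t := lt_trans (by positivity) hy
    have hexp1 : (0:ℝ) < Real.exp 1 := Real.exp_pos 1
    -- 2^K ≤ e + t
    have h2K : (2:ℝ)^K ≤ Real.exp 1 + t := by
      have h1 : (2:ℝ)^K ≤ Real.exp 1 ^ K := by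
        apply pow_le_pow_left₀ (by norm_num)
        have := Real.add_one_le_exp (1:ℝ); linarith
      have h2 : Real.exp 1 ^ K = Real.exp (K : ℝ) := by
        rw [← Real.exp_nat_mul]; ring_nf
      have h3 : (K:ℝ) ≤ Real.log (Real.exp 1 + t) := Nat.floor_le (Real.log_nonneg (by nlinarith [Real.add_one_le_exp (1:ℝ)]))
      have h4 : Real.exp (K:ℝ) ≤ Real.exp 1 + t := by
        calc Real.exp (K:ℝ) ≤ Real.exp (Real.log (Real.exp 1 + t)) := Real.exp_le_exp.mpr h3
        _ = Real.exp 1 + t := Real.exp_log (by positivity)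
      linarith [h1, h2 ▸ h4]
    -- scale lower bound
    have hMc : (10/11 : ℝ) ≤ (2:ℝ)^(-(K:ℤ)) * t := by
      have hpos : (0:ℝ) < (2:ℝ)^K := by positivity
      rw [zpow_neg, zpow_natCast, ← div_eq_inv_mul, le_div_iff₀ hpos]
      linarith [h2K, hy]
    -- separation bound
    have hsep : ∀ k ∈ Finset.Icc 1 K, k ≠ k0 → (2:ℝ)^(-(k:ℤ)-2) * t ≤ d k := by
      intro k hk hkne
      have hmin := hk0min k hk
      have hdiff : ((2:ℝ)^(-(k:ℤ)) - (2:ℝ)^(-(k0:ℤ))) • y =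
          (x + (2:ℝ)^(-(k:ℤ)) • y) - (x + (2:ℝ)^(-(k0:ℤ)) • y) := by
        module
      have hnorm : |(2:ℝ)^(-(k:ℤ)) - (2:ℝ)^(-(k0:ℤ))| * t ≤ d k + d k0 := by
        have := norm_sub_le (x + (2:ℝ)^(-(k:ℤ)) • y) (x + (2:ℝ)^(-(k0:ℤ)) • y)
        rw [← hdiff, norm_smul, Real.norm_eq_abs] at this
        exact this
      have habs : (2:ℝ)^(-(k:ℤ)-1) ≤ |(2:ℝ)^(-(k:ℤ)) - (2:ℝ)^(-(k0:ℤ))| := by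
        rcases lt_or_gt_of_ne hkne with h | h
        · rw [abs_of_nonneg (by
            have : (2:ℝ)^(-(k0:ℤ)) ≤ (2:ℝ)^(-(k:ℤ)) :=
              zpow_le_zpow_right₀ (by norm_num) (by omega)
            linarith)]
          have h1 : (2:ℝ)^(-(k0:ℤ)) ≤ (2:ℝ)^(-(k:ℤ)-1) :=
            zpow_le_zpow_right₀ (by norm_num) (by omega)
          have h2 : (2:ℝ)^(-(k:ℤ)) = 2 * (2:ℝ)^(-(k:ℤ)-1) := by
            rw [show (-(k:ℤ)) = (-(k:ℤ)-1)+1 by ring, zpow_add_one₀ (by norm_num : (2:ℝ) ≠ 0)]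
            ring
          linarith
        · rw [abs_of_nonpos (by
            have : (2:ℝ)^(-(k:ℤ)) ≤ (2:ℝ)^(-(k0:ℤ)) :=
              zpow_le_zpow_right₀ (by norm_num) (by omega)
            linarith)]
          have h1 : (2:ℝ)^(-(k:ℤ)) ≤ (2:ℝ)^(-(k0:ℤ)-1) :=
            zpow_le_zpow_right₀ (by norm_num) (by omega)
          have h2 : (2:ℝ)^(-(k0:ℤ)) = 2 * (2:ℝ)^(-(k0:ℤ)-1) := by
            rw [show (-(k0:ℤ)) = (-(k0:ℤ)-1)+1 by ring, zpow_add_one₀ (by norm_num : (2:ℝ) ≠ 0)]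
            ring
          have h3 : (2:ℝ)^(-(k:ℤ)-1) ≤ (2:ℝ)^(-(k0:ℤ)-1) :=
            zpow_le_zpow_right₀ (by norm_num) (by omega)
          linarith
      have h2 : (2:ℝ)^(-(k:ℤ)-1) * t ≤ 2 * d k := by
        have := mul_le_mul_of_nonneg_right habs (le_of_lt ht0)
        linarith
      have h3 : (2:ℝ)^(-(k:ℤ)-2) * t = ((2:ℝ)^(-(k:ℤ)-1) * t) / 2 := by
        rw [show (-(k:ℤ)-1 : ℤ) = (-(k:ℤ)-2) + 1 by ring, zpow_add_one₀ (by norm_num : (2:ℝ) ≠ 0)]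
        ring
      linarith
    -- per-term bound for k ≠ k0
    have hterm : ∀ k ∈ Finset.Icc 1 K, k ≠ k0 →
        (1 + d k) ^ (-L) ≤ (22/5:ℝ)^L * (1/2:ℝ)^(K - k) := by
      intro k hk hkne
      obtain ⟨hk1, hkK⟩ := Finset.mem_Icc.mp hk
      set A : ℝ := (2:ℝ)^((K:ℤ)-k-2) * (10/11) with hA
      have hA0 : 0 < A := by positivity
      have hA1 : A ≤ (2:ℝ)^(-(k:ℤ)-2) * t := by
        have := mul_le_mul_of_nonneg_left hMc (le_of_lt (zpow_pos (by norm_num : (0:ℝ)<2) ((K:ℤ)-k-2)))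
        calc A ≤ (2:ℝ)^((K:ℤ)-k-2) * ((2:ℝ)^(-(K:ℤ)) * t) := this
          _ = (2:ℝ)^(-(k:ℤ)-2) * t := by
            rw [← mul_assoc, ← zpow_add₀ (by norm_num : (2:ℝ) ≠ 0)]
            ring_nf
      have hA2 : A ≤ 1 + d k := by
        have := hsep k hk hkne
        have hdk0 : 0 ≤ d k := norm_nonneg _
        linarith
      have step1 : (1 + d k) ^ (-L) ≤ A ^ (-L) :=
        Real.rpow_le_rpow_of_nonpos hA0 hA2 (by linarith)
      -- compute A ^ (-L)
      have hm : ((K:ℤ)-k-2 : ℤ) = ((K - k : ℕ) : ℤ) - 2 := by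
        omega
      have step2 : A ^ (-L) ≤ (22/5:ℝ)^L * (1/2:ℝ)^(K - k) := by
        set m : ℕ := K - k with hmdef
        rw [hA, Real.mul_rpow (by positivity) (by norm_num)]
        have e1 : ((2:ℝ)^((K:ℤ)-k-2)) ^ (-L) = (2:ℝ) ^ ((((m:ℝ)) - 2) * (-L)) := by
          rw [← Real.rpow_intCast 2 ((K:ℤ)-k-2), ← Real.rpow_mul (by norm_num)]
          congr 1
          push_cast [hm]
          ring
        have e2 : ((10/11:ℝ)) ^ (-L) = (11/10:ℝ) ^ L := by
          rw [Real.rpow_neg (by norm_num), show (11/10:ℝ) = (10/11:ℝ)⁻¹ by norm_num,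
            Real.inv_rpow (by norm_num)]
        rw [e1, e2]
        have e3 : (2:ℝ) ^ ((((m:ℝ)) - 2) * (-L)) ≤ (2:ℝ) ^ ((2*L : ℝ) - m) := by
          apply Real.rpow_le_rpow_of_exponent_le (by norm_num)
          have hm0 : (0:ℝ) ≤ (m:ℝ) := Nat.cast_nonneg m
          nlinarith
        have e4 : (2:ℝ) ^ ((2*L : ℝ) - m) = (4:ℝ)^L * (1/2:ℝ)^m := by
          rw [show (2*L - (m:ℝ)) = 2*L + (-(m:ℝ)) by ring, Real.rpow_add (by norm_num),
            Real.rpow_neg (by norm_num), Real.rpow_natCast]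
          have h42 : (2:ℝ) ^ (2*L) = (4:ℝ)^L := by
            rw [show (2*L:ℝ) = L + L by ring, Real.rpow_add (by norm_num),
              show (4:ℝ) = 2*2 by norm_num, Real.mul_rpow (by norm_num) (by norm_num)]
          rw [h42, one_div, inv_pow]
        calc (2:ℝ) ^ ((((m:ℝ)) - 2) * (-L)) * (11/10:ℝ)^L
            ≤ ((4:ℝ)^L * (1/2:ℝ)^m) * (11/10:ℝ)^L := by
              rw [← e4]
              exact mul_le_mul_of_nonneg_right e3 (by positivity)
          _ = (22/5:ℝ)^L * (1/2:ℝ)^m := by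
              have h45 : (4:ℝ)^L * (11/10:ℝ)^L = (22/5:ℝ)^L := by
                rw [← Real.mul_rpow (by norm_num) (by norm_num)]
                norm_num
              rw [mul_right_comm, h45]
      linarith
    -- split the sum
    rw [← Finset.add_sum_erase _ _ hk0mem]
    have hbound1 : (1 + d k0) ^ (-L) ≤ 1 :=
      Real.rpow_le_one_of_one_le_of_nonpos (by have := norm_nonneg (x + (2:ℝ)^(-(k0:ℤ)) • y); simp only [hd]; linarith) (by linarith)
    have hbound2 : ∑ k ∈ (Finset.Icc 1 K).erase k0, (1 + d k) ^ (-L) ≤ 2 * (22/5:ℝ)^L := by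
      calc ∑ k ∈ (Finset.Icc 1 K).erase k0, (1 + d k) ^ (-L)
          ≤ ∑ k ∈ (Finset.Icc 1 K).erase k0, (22/5:ℝ)^L * (1/2:ℝ)^(K - k) := by
            apply Finset.sum_le_sum
            intro k hk
            exact hterm k (Finset.mem_of_mem_erase hk) (Finset.ne_of_mem_erase hk)
        _ ≤ ∑ k ∈ Finset.Icc 1 K, (22/5:ℝ)^L * (1/2:ℝ)^(K - k) := by
            apply Finset.sum_le_sum_of_subset_of_nonneg (Finset.erase_subset _ _)
            intro k _ _; positivity
        _ = (22/5:ℝ)^L * ∑ k ∈ Finset.Icc 1 K, (1/2:ℝ)^(K - k) := by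
            rw [Finset.mul_sum]
        _ ≤ (22/5:ℝ)^L * 2 := by
            apply mul_le_mul_of_nonneg_left _ (by positivity)
            have hre : ∑ k ∈ Finset.Icc 1 K, (1/2:ℝ)^(K - k)
                = ∑ j ∈ Finset.range K, (1/2:ℝ)^(K - (1 + j)) := by
              rw [← Finset.Ico_add_one_right_eq_Icc, Finset.sum_Ico_eq_sum_range]
              simp
            rw [hre]
            have hre2 : ∑ j ∈ Finset.range K, (1/2:ℝ)^(K - (1 + j))
                = ∑ j ∈ Finset.range K, (1/2:ℝ)^j := by
              rw [← Finset.sum_range_reflect]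
              apply Finset.sum_congr rfl
              intro j hj
              congr 1
              have := Finset.mem_range.mp hj
              omega
            rw [hre2]
            exact sum_geometric_two_le K
        _ = 2 * (22/5:ℝ)^L := by ring
    linarith
  · rw [Finset.not_nonempty_iff_eq_empty] at hne
    rw [hne, Finset.sum_empty]
    positivity
end

section
/- Let $\sigma > n$, $j \in \mathbb{Z}$, $y, w \in \mathbb{R}^n$, and define $\Lambda_{j,\sigma}^y(x) := 2^{jn}(1 + |2^j x - y|)^{-\sigma}$. Then $\int_{|x| > 2|w|} |\Lambda_{j,\sigma}^y(x - w) - \Lambda_{j,\sigma}^y(x)|\, dx \le C_{n,\sigma}\, 2^j |w|$ for a constant $C_{n,\sigma}$ independent of $j$, $y$, and $w$. -/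
open Real MeasureTheory

lemma key_mvt (σ : ℝ) (hσ : 0 < σ) {a b : ℝ} (ha : 1 ≤ a) (hb : 1 ≤ b) (hab : a ≤ b) :
    |a ^ (-σ) - b ^ (-σ)| ≤ σ * a ^ (-(σ+1)) * |a - b| := by
  have h1 : ∀ x ∈ Set.Icc a b, HasDerivWithinAt (fun t : ℝ => t ^ (-σ))
      ((-σ) * x ^ (-σ - 1)) (Set.Icc a b) x := by
    intro x hx
    exact (Real.hasDerivAt_rpow_const (p := -σ)
      (Or.inl (by linarith [hx.1]))).hasDerivWithinAt
  have h2 : ∀ x ∈ Set.Icc a b, ‖(-σ) * x ^ (-σ - 1)‖ ≤ σ * a ^ (-(σ+1)) := by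
    intro x hx
    rw [norm_mul, Real.norm_eq_abs, Real.norm_eq_abs, abs_neg, abs_of_pos hσ,
      abs_of_pos (Real.rpow_pos_of_pos (by linarith [hx.1]) _)]
    have : x ^ (-σ - 1) ≤ a ^ (-σ - 1) :=
      Real.rpow_le_rpow_of_nonpos (by linarith) hx.1 (by linarith)
    rw [show -(σ+1) = -σ - 1 by ring]
    exact mul_le_mul_of_nonneg_left this hσ.le
  have := (convex_Icc a b).norm_image_sub_le_of_norm_hasDerivWithin_le h1 h2
    (Set.left_mem_Icc.2 hab) (Set.right_mem_Icc.2 hab)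
  simpa [abs_sub_comm, Real.norm_eq_abs] using this

lemma key_est (σ : ℝ) (hσ : 0 < σ) {a b : ℝ} (ha : 1 ≤ a) (hb : 1 ≤ b) :
    |a ^ (-σ) - b ^ (-σ)| ≤ σ * (a ^ (-(σ+1)) + b ^ (-(σ+1))) * |a - b| := by
  rcases le_total a b with hab | hab
  · refine (key_mvt σ hσ ha hb hab).trans ?_
    have h : (0:ℝ) ≤ b ^ (-(σ+1)) := (Real.rpow_pos_of_pos (by linarith) _).le
    refine mul_le_mul_of_nonneg_right (mul_le_mul_of_nonneg_left ?_ hσ.le) (abs_nonneg _)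
    linarith
  · rw [abs_sub_comm, abs_sub_comm a b]
    refine (key_mvt σ hσ hb ha hab).trans ?_
    have h : (0:ℝ) ≤ a ^ (-(σ+1)) := (Real.rpow_pos_of_pos (by linarith) _).le
    refine mul_le_mul_of_nonneg_right (mul_le_mul_of_nonneg_left ?_ hσ.le) (abs_nonneg _)
    linarith

/-- smoothness estimate for the shifted kernels
`Λ_{j,σ}^y(x) = 2^{jn}(1+|2^j x - y|)^{-σ}`:
`∫_{|x|>2|w|} |Λ_{j,σ}^y(x-w) - Λ_{j,σ}^y(x)| dx ≤ C 2^j |w|`. -/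
theorem lambda_kernel_translation_small_scale (n : ℕ) (σ : ℝ) (hσ : (n : ℝ) < σ) :
    ∃ C : ℝ, ∀ (j : ℤ) (y w : EuclideanSpace ℝ (Fin n)),
      ∫ x in {x : EuclideanSpace ℝ (Fin n) | ‖x‖ > 2 * ‖w‖},
        |(2 : ℝ) ^ (j * (n : ℤ)) * (1 + ‖(2 : ℝ) ^ j • (x - w) - y‖) ^ (-σ) -
          (2 : ℝ) ^ (j * (n : ℤ)) * (1 + ‖(2 : ℝ) ^ j • x - y‖) ^ (-σ)|
        ≤ C * (2 : ℝ) ^ j * ‖w‖ := by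
  have hσ0 : 0 < σ := lt_of_le_of_lt (Nat.cast_nonneg n) hσ
  set E := EuclideanSpace ℝ (Fin n)
  set g : E → ℝ := fun u => (1 + ‖u‖) ^ (-(σ+1)) with hgdef
  have hgint : Integrable g := by
    apply integrable_one_add_norm
    rw [finrank_euclideanSpace_fin]; linarith
  have hgnn : ∀ u, 0 ≤ g u := fun u => (Real.rpow_pos_of_pos (by positivity) _).le
  set I : ℝ := ∫ u : E, g u with hI
  refine ⟨2 * σ * I, fun j y w => ?_⟩
  set c : ℝ := (2:ℝ)^j with hc
  have hc0 : 0 < c := by positivity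
  have hA : (2:ℝ) ^ (j * (n : ℤ)) = c ^ n := by
    rw [hc, ← zpow_natCast ((2:ℝ)^j) n, ← zpow_mul]
  -- integrability and integral of shifted rescaled kernels
  have h1 : ∀ d : E, Integrable (fun x : E => g (c • x - d)) := fun d =>
    (hgint.comp_sub_right d).comp_smul (ne_of_gt hc0)
  have h2 : ∀ d : E, ∫ x : E, g (c • x - d) = (c ^ n)⁻¹ * I := by
    intro d
    have := Measure.integral_comp_smul (μ := (volume : Measure E)) (fun u => g (u - d)) c
    simp only [integral_sub_right_eq_self (fun u : E => g u) d] at this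
    rw [show (∫ x : E, g (c • x - d)) = ∫ x : E, (fun u => g (u - d)) (c • x) from rfl, this,
      finrank_euclideanSpace_fin, abs_of_pos (by positivity), smul_eq_mul]
  -- the dominating function
  set G : E → ℝ := fun x => σ * (c * ‖w‖) * (c ^ n * (g (c • (x - w) - y) + g (c • x - y)))
    with hGdef
  have he : (fun x : E => g (c • (x - w) - y)) = fun x : E => g (c • x - (c • w + y)) := by
    funext x; congr 1; rw [smul_sub]; abel
  have hshift : Integrable (fun x : E => g (c • (x - w) - y)) := by
    rw [he]; exact h1 _
  have hGint : Integrable G := ((hshift.add (h1 y)).const_mul _).const_mul _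
  have hGnn : ∀ x, 0 ≤ G x := by
    intro x
    have := hgnn (c • (x - w) - y); have := hgnn (c • x - y)
    positivity
  -- pointwise bound
  have hpt : ∀ x : E,
      |(2 : ℝ) ^ (j * (n : ℤ)) * (1 + ‖c • (x - w) - y‖) ^ (-σ) -
        (2 : ℝ) ^ (j * (n : ℤ)) * (1 + ‖c • x - y‖) ^ (-σ)| ≤ G x := by
    intro x
    set a : ℝ := 1 + ‖c • (x - w) - y‖ with ha
    set b : ℝ := 1 + ‖c • x - y‖ with hb
    have ha1 : 1 ≤ a := le_add_of_nonneg_right (norm_nonneg _)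
    have hb1 : 1 ≤ b := le_add_of_nonneg_right (norm_nonneg _)
    have habd : |a - b| ≤ c * ‖w‖ := by
      rw [ha, hb]
      have : (1 + ‖c • (x - w) - y‖) - (1 + ‖c • x - y‖) = ‖c • (x - w) - y‖ - ‖c • x - y‖ := by
        ring
      rw [this]
      refine (abs_norm_sub_norm_le _ _).trans ?_
      have : (c • (x - w) - y) - (c • x - y) = -(c • w) := by rw [smul_sub]; abel
      rw [this, norm_neg, norm_smul, Real.norm_eq_abs, abs_of_pos hc0]
    rw [hA, ← mul_sub, abs_mul, abs_of_pos (by positivity : (0:ℝ) < c ^ n)]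
    calc c ^ n * |a ^ (-σ) - b ^ (-σ)|
        ≤ c ^ n * (σ * (a ^ (-(σ+1)) + b ^ (-(σ+1))) * |a - b|) :=
          mul_le_mul_of_nonneg_left (key_est σ hσ0 ha1 hb1) (by positivity)
      _ ≤ c ^ n * (σ * (a ^ (-(σ+1)) + b ^ (-(σ+1))) * (c * ‖w‖)) := by
          refine mul_le_mul_of_nonneg_left (mul_le_mul_of_nonneg_left habd ?_) (by positivity)
          have : (0:ℝ) < a ^ (-(σ+1)) := Real.rpow_pos_of_pos (by linarith) _
          have : (0:ℝ) < b ^ (-(σ+1)) := Real.rpow_pos_of_pos (by linarith) _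
          positivity
      _ = G x := by rw [hGdef]; simp only [hgdef, ha, hb]; ring
  -- assemble
  calc ∫ x in {x : E | ‖x‖ > 2 * ‖w‖},
        |(2 : ℝ) ^ (j * (n : ℤ)) * (1 + ‖c • (x - w) - y‖) ^ (-σ) -
          (2 : ℝ) ^ (j * (n : ℤ)) * (1 + ‖c • x - y‖) ^ (-σ)|
      ≤ ∫ x in {x : E | ‖x‖ > 2 * ‖w‖}, G x := by
        refine integral_mono_of_nonneg (Filter.Eventually.of_forall fun x => abs_nonneg _)
          (hGint.restrict) (Filter.Eventually.of_forall fun x => hpt x)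
    _ ≤ ∫ x : E, G x :=
        setIntegral_le_integral hGint (Filter.Eventually.of_forall fun x => hGnn x)
    _ = 2 * σ * I * c * ‖w‖ := by
        have hsum : ∫ x : E, (g (c • (x - w) - y) + g (c • x - y))
            = (c ^ n)⁻¹ * I + (c ^ n)⁻¹ * I := by
          rw [integral_add hshift (h1 y), he, h2 (c • w + y), h2 y]
        rw [hGdef]
        rw [integral_const_mul, integral_const_mul, hsum]
        have hcn : (0:ℝ) < c ^ n := by positivity
        field_simp
        ring
end

section
/- Let $\sigma > 0$, $q > 0$, $k \in \mathbb{Z}$, $y \in \mathbb{R}^n$, let $P$ be a cube with $2^k \ell(P) < 1$, and let $f$ be a nonnegative measurable function. Then for all $u, z \in P$, $\big|\big(\mathfrak{M}_{\sigma,2^k,y}^q f(z)\big)^q - \big(\mathfrak{M}_{\sigma,2^k,y}^q f(u)\big)^q\big| \le C_{n,\sigma,q}\, 2^k \ell(P)\, \big(\mathfrak{M}_{\sigma + 1/q, 2^k, y}^q f(z)\big)^q$, where $\mathfrak{M}_{\sigma,2^k,y}^q f(x)^q := 2^{kn}\int_{\mathbb{R}^n} f(x-z)^q (1+|2^k z -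 y|)^{-\sigma q}\, dz$. -/
open Real MeasureTheory ENNReal NNReal

private lemma one_sub_pow_le' (m : ℕ) {r : ℝ} (h0 : 0 ≤ r) (h1 : r ≤ 1) :
    1 - r ^ m ≤ m * (1 - r) := by
  induction m with
  | zero => simp
  | succ m ih =>
    have hr : r ^ m ≤ 1 := pow_le_one₀ h0 h1
    have h2 : 0 ≤ r ^ m := pow_nonneg h0 m
    have h3 : r * (1 - r ^ m) ≤ 1 - r ^ m := mul_le_of_le_one_left (by linarith) h1
    rw [pow_succ]
    push_cast
    nlinarith [h3, ih]

private lemma rpow_neg_sub_le' {s x y : ℝ} (hs : 0 < s) (hx : 1 ≤ x) (hxy : x ≤ y) :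
    x ^ (-s) - y ^ (-s) ≤ (⌈s⌉₊ : ℝ) * (y - x) * x ^ (-(s+1)) := by
  have hx0 : 0 < x := lt_of_lt_of_le one_pos hx
  have hy0 : 0 < y := lt_of_lt_of_le hx0 hxy
  set r : ℝ := x / y with hrdef
  have hr0 : 0 < r := div_pos hx0 hy0
  have hr1 : r ≤ 1 := (div_le_one hy0).2 hxy
  have hid : y ^ (-s) = x ^ (-s) * r ^ s := by
    rw [hrdef, Real.div_rpow hx0.le hy0.le, Real.rpow_neg hx0.le, Real.rpow_neg hy0.le]
    field_simp
  have hm : s ≤ (⌈s⌉₊ : ℝ) := Nat.le_ceil s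
  have h1 : r ^ ((⌈s⌉₊ : ℕ) : ℝ) ≤ r ^ s := Real.rpow_le_rpow_of_exponent_ge hr0 hr1 hm
  have h2 : r ^ (⌈s⌉₊ : ℕ) ≤ r ^ s := by rwa [Real.rpow_natCast r] at h1
  have h3 : 1 - r ^ s ≤ (⌈s⌉₊ : ℝ) * (1 - r) :=
    le_trans (by linarith) (one_sub_pow_le' _ hr0.le hr1)
  have hA : 0 < x ^ (-s) := Real.rpow_pos_of_pos hx0 _
  have h4 : x ^ (-s) - y ^ (-s) = x ^ (-s) * (1 - r ^ s) := by rw [hid]; ring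
  have h5 : (1 : ℝ) - r = (y - x) / y := by rw [hrdef]; field_simp
  calc x ^ (-s) - y ^ (-s) = x ^ (-s) * (1 - r ^ s) := h4
    _ ≤ x ^ (-s) * ((⌈s⌉₊ : ℝ) * (1 - r)) := mul_le_mul_of_nonneg_left h3 hA.le
    _ = (⌈s⌉₊ : ℝ) * ((y - x) / y) * x ^ (-s) := by rw [h5]; ring
    _ ≤ (⌈s⌉₊ : ℝ) * ((y - x) / x) * x ^ (-s) := by
        gcongr <;> first | positivity | linarith
    _ = (⌈s⌉₊ : ℝ) * (y - x) * x ^ (-(s+1)) := by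
        rw [show -(s+1) = -s + (-1) by ring, Real.rpow_add hx0, Real.rpow_neg_one]
        ring

private lemma weight_osc' {s δ₀ a b : ℝ} (hs : 0 < s) (hδ : 0 ≤ δ₀)
    (ha : 0 ≤ a) (hb : 0 ≤ b) (hab : |a - b| ≤ δ₀) :
    |(1+a) ^ (-s) - (1+b) ^ (-s)| ≤
      ((⌈s⌉₊ : ℝ) * (1+δ₀) ^ (s+1)) * |a - b| * (1+a) ^ (-(s+1)) := by
  have h1a : (1:ℝ) ≤ 1 + a := by linarith
  have h1b : (1:ℝ) ≤ 1 + b := by linarith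
  have hpa : (0:ℝ) < 1 + a := by linarith
  have hpb : (0:ℝ) < 1 + b := by linarith
  have hδ1 : (1:ℝ) ≤ (1+δ₀) ^ (s+1) := Real.one_le_rpow (by linarith) (by linarith)
  have hM0 : (0:ℝ) ≤ (⌈s⌉₊ : ℝ) := Nat.cast_nonneg _
  have anti : ∀ {p r : ℝ}, 0 < p → p ≤ r → r ^ (-s) ≤ p ^ (-s) := by
    intro p r hp hpr
    rw [Real.rpow_neg hp.le, Real.rpow_neg (hp.trans_le hpr).le, ← one_div, ← one_div]
    exact one_div_le_one_div_of_le (Real.rpow_pos_of_pos hp _)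
      (Real.rpow_le_rpow hp.le hpr hs.le)
  rcases le_total a b with hle | hle
  · have hd := rpow_neg_sub_le' hs h1a (show 1+a ≤ 1+b by linarith)
    rw [abs_of_nonneg (sub_nonneg.2 (anti hpa (by linarith))), abs_sub_comm,
      abs_of_nonneg (sub_nonneg.2 hle)]
    calc (1+a) ^ (-s) - (1+b) ^ (-s)
        ≤ (⌈s⌉₊ : ℝ) * ((1+b) - (1+a)) * (1+a) ^ (-(s+1)) := hd
      _ = (⌈s⌉₊ : ℝ) * 1 * (b - a) * (1+a) ^ (-(s+1)) := by ring
      _ ≤ (⌈s⌉₊ : ℝ) * (1+δ₀) ^ (s+1) * (b - a) * (1+a) ^ (-(s+1)) := by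
          gcongr <;> first | positivity | linarith
  · have hd := rpow_neg_sub_le' hs h1b (show 1+b ≤ 1+a by linarith)
    rw [abs_sub_comm, abs_of_nonneg (sub_nonneg.2 (anti hpb (by linarith))),
      abs_of_nonneg (sub_nonneg.2 hle)]
    have hby : 1 + a ≤ (1+b) * (1+δ₀) := by
      have h9 := (abs_le.1 hab).2
      nlinarith [mul_nonneg hb hδ]
    have hZpos : (0:ℝ) < (1+b) ^ (s+1) := Real.rpow_pos_of_pos hpb _
    have hXpos : (0:ℝ) < (1+a) ^ (s+1) := Real.rpow_pos_of_pos hpa _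
    have hX : (1+a) ^ (s+1) ≤ (1+b) ^ (s+1) * (1+δ₀) ^ (s+1) := by
      rw [← Real.mul_rpow hpb.le (by linarith : (0:ℝ) ≤ 1+δ₀)]
      exact Real.rpow_le_rpow hpa.le hby (by linarith)
    have hkey : (1+b) ^ (-(s+1)) ≤ (1+δ₀) ^ (s+1) * (1+a) ^ (-(s+1)) := by
      have h9 : 1 / (1+b) ^ (s+1) ≤ (1+δ₀) ^ (s+1) / (1+a) ^ (s+1) := by
        rw [div_le_div_iff₀ hZpos hXpos]
        nlinarith [hX]
      rw [Real.rpow_neg hpb.le, Real.rpow_neg hpa.le]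
      calc ((1+b) ^ (s+1))⁻¹ = 1 / (1+b) ^ (s+1) := (one_div _).symm
        _ ≤ (1+δ₀) ^ (s+1) / (1+a) ^ (s+1) := h9
        _ = (1+δ₀) ^ (s+1) * ((1+a) ^ (s+1))⁻¹ := div_eq_mul_inv _ _
    calc (1+b) ^ (-s) - (1+a) ^ (-s)
        ≤ (⌈s⌉₊ : ℝ) * ((1+a) - (1+b)) * (1+b) ^ (-(s+1)) := hd
      _ ≤ (⌈s⌉₊ : ℝ) * ((1+a) - (1+b)) * ((1+δ₀) ^ (s+1) * (1+a) ^ (-(s+1))) := by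
          refine mul_le_mul_of_nonneg_left hkey ?_
          have h0 : (1:ℝ) + a - (1 + b) = a - b := by ring
          rw [h0]
          exact mul_nonneg hM0 (sub_nonneg.2 hle)
      _ = (⌈s⌉₊ : ℝ) * (1+δ₀) ^ (s+1) * (a - b) * (1+a) ^ (-(s+1)) := by ring


set_option maxHeartbeats 1000000 in
/-- oscillation estimate for the `q`-th power of the shifted Peetre
maximal function: for `u, z` in a cube `P` with `2^k ℓ(P) < 1`,
`|𝔐^q_{σ,2^k,y}f(z)^q - 𝔐^q_{σ,2^k,y}f(u)^q| ≤ C 2^k ℓ(P) (𝔐^q_{σ+1/q,2^k,y}f(z))^q`. -/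
theorem shifted_peetre_oscillation (n : ℕ) (σ q : ℝ) (hσ : 0 < σ) (hq : 0 < q) :
    ∃ C : ℝ≥0, ∀ (k : ℤ) (y c : EuclideanSpace ℝ (Fin n)) (ℓ : ℝ), 0 < ℓ →
      (2 : ℝ) ^ k * ℓ < 1 →
      ∀ f : EuclideanSpace ℝ (Fin n) → ℝ≥0∞, Measurable f →
      ∀ u z : EuclideanSpace ℝ (Fin n),
        (∀ i, |u i - c i| ≤ ℓ / 2) → (∀ i, |z i - c i| ≤ ℓ / 2) →
        max (((2 : ℝ≥0∞) ^ (k * (n : ℤ)) *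
              ∫⁻ v, f (z - v) ^ q *
                ENNReal.ofReal ((1 + ‖(2 : ℝ) ^ k • v - y‖) ^ (-(σ * q)))) -
            ((2 : ℝ≥0∞) ^ (k * (n : ℤ)) *
              ∫⁻ v, f (u - v) ^ q *
                ENNReal.ofReal ((1 + ‖(2 : ℝ) ^ k • v - y‖) ^ (-(σ * q)))))
          (((2 : ℝ≥0∞) ^ (k * (n : ℤ)) *
              ∫⁻ v, f (u - v) ^ q *
                ENNReal.ofReal ((1 + ‖(2 : ℝ) ^ k • v - y‖) ^ (-(σ * q)))) -
            ((2 : ℝ≥0∞) ^ (k * (n : ℤ)) *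
              ∫⁻ v, f (z - v) ^ q *
                ENNReal.ofReal ((1 + ‖(2 : ℝ) ^ k • v - y‖) ^ (-(σ * q)))))
        ≤ (C : ℝ≥0∞) * ENNReal.ofReal ((2 : ℝ) ^ k * ℓ) *
            ((2 : ℝ≥0∞) ^ (k * (n : ℤ)) *
              ∫⁻ v, f (z - v) ^ q *
                ENNReal.ofReal ((1 + ‖(2 : ℝ) ^ k • v - y‖) ^ (-((σ + 1 / q) * q)))) := by
  have hs : 0 < σ * q := mul_pos hσ hq
  set δ₀ : ℝ := Real.sqrt n with hδdef
  have hδ0 : (0:ℝ) ≤ δ₀ := Real.sqrt_nonneg n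
  set M : ℝ := (⌈σ * q⌉₊ : ℝ) * (1 + δ₀) ^ (σ * q + 1) with hMdef
  have hM0 : 0 ≤ M := mul_nonneg (Nat.cast_nonneg _) (Real.rpow_nonneg (by linarith) _)
  refine ⟨(M * δ₀).toNNReal, ?_⟩
  intro k y c ℓ hℓ hkl f hf u z hu hz
  have h2k : (0:ℝ) < (2:ℝ) ^ k := zpow_pos (by norm_num) k
  have hkl0 : (0:ℝ) < (2:ℝ) ^ k * ℓ := mul_pos h2k hℓ
  -- exponent identity
  have hexp : -((σ + 1 / q) * q) = -(σ * q + 1) := by field_simp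
  simp only [hexp]
  -- measurability of the substituted integrand
  have hwm : ∀ (x : EuclideanSpace ℝ (Fin n)) (e : ℝ),
      Measurable fun t : EuclideanSpace ℝ (Fin n) =>
        f t ^ q * ENNReal.ofReal ((1 + ‖(2:ℝ) ^ k • (x - t) - y‖) ^ e) := by
    intro x e
    refine (hf.pow measurable_const).mul ?_
    refine (ENNReal.continuous_ofReal.comp ?_).measurable
    have hc : Continuous fun t : EuclideanSpace ℝ (Fin n) =>
        1 + ‖(2:ℝ) ^ k • (x - t) - y‖ := by fun_prop
    exact hc.rpow_const fun t => Or.inl (by positivity)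
  -- change of variables
  have hcov : ∀ (x : EuclideanSpace ℝ (Fin n)) (e : ℝ),
      (∫⁻ v, f (x - v) ^ q * ENNReal.ofReal ((1 + ‖(2:ℝ) ^ k • v - y‖) ^ e))
        = ∫⁻ t, f t ^ q * ENNReal.ofReal ((1 + ‖(2:ℝ) ^ k • (x - t) - y‖) ^ e) := by
    intro x e
    have hmp : MeasurePreserving (fun t : EuclideanSpace ℝ (Fin n) => x - t)
        volume volume := by
      have h1 := (measurePreserving_add_left (volume : Measure (EuclideanSpace ℝ (Fin n))) x).comp
        (Measure.measurePreserving_neg volume)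
      simpa [Function.comp_def, sub_eq_add_neg] using h1
    rw [← hmp.lintegral_comp (hwm x e)]
    refine lintegral_congr fun v => ?_
    rw [_root_.sub_sub_cancel]
  rw [hcov z (-(σ * q)), hcov u (-(σ * q)), hcov z (-(σ * q + 1))]
  -- distance bound
  have hzu : ‖z - u‖ ≤ δ₀ * ℓ := by
    rw [EuclideanSpace.norm_eq]
    have hterm : ∀ i, ‖(z - u) i‖ ^ 2 ≤ ℓ ^ 2 := by
      intro i
      have h1 := abs_le.1 (hz i)
      have h2 := abs_le.1 (hu i)
      have h3 : |(z - u) i| ≤ ℓ := by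
        have hzi : (z - u) i = z i - u i := rfl
        rw [hzi]
        exact abs_le.2 ⟨by linarith [h1.1, h2.2], by linarith [h1.2, h2.1]⟩
      rw [Real.norm_eq_abs]
      nlinarith [abs_nonneg ((z - u) i)]
    calc √(∑ i, ‖(z - u) i‖ ^ 2) ≤ √(∑ _i : Fin n, ℓ ^ 2) :=
          Real.sqrt_le_sqrt (Finset.sum_le_sum fun i _ => hterm i)
      _ = √((n : ℝ) * ℓ ^ 2) := by
          rw [Finset.sum_const, Finset.card_univ, Fintype.card_fin, nsmul_eq_mul]
      _ = δ₀ * ℓ := by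
          rw [Real.sqrt_mul (Nat.cast_nonneg n), Real.sqrt_sq hℓ.le, hδdef]
  -- pointwise oscillation of the weights
  have habs : ∀ t : EuclideanSpace ℝ (Fin n),
      |‖(2:ℝ) ^ k • (z - t) - y‖ - ‖(2:ℝ) ^ k • (u - t) - y‖| ≤ (2:ℝ) ^ k * ℓ * δ₀ := by
    intro t
    have h2 : ((2:ℝ) ^ k • (z - t) - y) - ((2:ℝ) ^ k • (u - t) - y) = (2:ℝ) ^ k • (z - u) := by
      rw [smul_sub, smul_sub, smul_sub]
      abel
    calc |‖(2:ℝ) ^ k • (z - t) - y‖ - ‖(2:ℝ) ^ k • (u - t) - y‖|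
        ≤ ‖((2:ℝ) ^ k • (z - t) - y) - ((2:ℝ) ^ k • (u - t) - y)‖ := abs_norm_sub_norm_le _ _
      _ = ‖(2:ℝ) ^ k • (z - u)‖ := by rw [h2]
      _ = (2:ℝ) ^ k * ‖z - u‖ := by rw [norm_smul, Real.norm_eq_abs, abs_of_pos h2k]
      _ ≤ (2:ℝ) ^ k * (δ₀ * ℓ) := by gcongr
      _ = (2:ℝ) ^ k * ℓ * δ₀ := by ring
  have hofkey : ∀ (x₁ x₂ : EuclideanSpace ℝ (Fin n)), (x₁ = z ∨ x₁ = u) → True →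
      True := fun _ _ _ _ => trivial
  -- real pointwise estimates, both directions, penalty in terms of z
  have hreal : ∀ (t : EuclideanSpace ℝ (Fin n)),
      (1 + ‖(2:ℝ) ^ k • (z - t) - y‖) ^ (-(σ * q)) ≤
        (1 + ‖(2:ℝ) ^ k • (u - t) - y‖) ^ (-(σ * q)) +
          (M * δ₀) * ((2:ℝ) ^ k * ℓ) * (1 + ‖(2:ℝ) ^ k • (z - t) - y‖) ^ (-(σ * q + 1)) ∧
      (1 + ‖(2:ℝ) ^ k • (u - t) - y‖) ^ (-(σ * q)) ≤
        (1 + ‖(2:ℝ) ^ k • (z - t) - y‖) ^ (-(σ * q)) +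
          (M * δ₀) * ((2:ℝ) ^ k * ℓ) * (1 + ‖(2:ℝ) ^ k • (z - t) - y‖) ^ (-(σ * q + 1)) := by
    intro t
    set a : ℝ := ‖(2:ℝ) ^ k • (z - t) - y‖ with hadef
    set b : ℝ := ‖(2:ℝ) ^ k • (u - t) - y‖ with hbdef
    have ha : 0 ≤ a := norm_nonneg _
    have hb : 0 ≤ b := norm_nonneg _
    have hab : |a - b| ≤ δ₀ := by
      refine (habs t).trans ?_
      nlinarith [hkl.le, hδ0, hkl0.le]
    have hosc : |(1 + a) ^ (-(σ * q)) - (1 + b) ^ (-(σ * q))| ≤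
        M * |a - b| * (1 + a) ^ (-(σ * q + 1)) := by
      rw [hMdef]; exact weight_osc' hs hδ0 ha hb hab
    have hW : (0:ℝ) ≤ (1 + a) ^ (-(σ * q + 1)) := Real.rpow_nonneg (by linarith) _
    have hbound : M * |a - b| * (1 + a) ^ (-(σ * q + 1)) ≤
        (M * δ₀) * ((2:ℝ) ^ k * ℓ) * (1 + a) ^ (-(σ * q + 1)) := by
      refine mul_le_mul_of_nonneg_right ?_ hW
      calc M * |a - b| ≤ M * ((2:ℝ) ^ k * ℓ * δ₀) := by
            exact mul_le_mul_of_nonneg_left (habs t) hM0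
        _ = (M * δ₀) * ((2:ℝ) ^ k * ℓ) := by ring
    have h1 := (abs_le.1 hosc).2
    have h2 := (abs_le.1 hosc).1
    constructor
    · linarith [hbound, h1]
    · linarith [hbound, h2]
  -- pass to ℝ≥0∞
  set K : ℝ≥0∞ := ENNReal.ofReal (M * δ₀) * ENNReal.ofReal ((2:ℝ) ^ k * ℓ) with hKdef
  have hof : ∀ (t : EuclideanSpace ℝ (Fin n)),
      ENNReal.ofReal ((1 + ‖(2:ℝ) ^ k • (z - t) - y‖) ^ (-(σ * q))) ≤
        ENNReal.ofReal ((1 + ‖(2:ℝ) ^ k • (u - t) - y‖) ^ (-(σ * q))) +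
          K * ENNReal.ofReal ((1 + ‖(2:ℝ) ^ k • (z - t) - y‖) ^ (-(σ * q + 1))) ∧
      ENNReal.ofReal ((1 + ‖(2:ℝ) ^ k • (u - t) - y‖) ^ (-(σ * q))) ≤
        ENNReal.ofReal ((1 + ‖(2:ℝ) ^ k • (z - t) - y‖) ^ (-(σ * q))) +
          K * ENNReal.ofReal ((1 + ‖(2:ℝ) ^ k • (z - t) - y‖) ^ (-(σ * q + 1))) := by
    intro t
    obtain ⟨h1, h2⟩ := hreal t
    have hWnn : (0:ℝ) ≤ (1 + ‖(2:ℝ) ^ k • (z - t) - y‖) ^ (-(σ * q + 1)) :=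
      Real.rpow_nonneg (by positivity) _
    have hWnn' : (0:ℝ) ≤ (1 + ‖(2:ℝ) ^ k • (u - t) - y‖) ^ (-(σ * q)) :=
      Real.rpow_nonneg (by positivity) _
    have hWnn'' : (0:ℝ) ≤ (1 + ‖(2:ℝ) ^ k • (z - t) - y‖) ^ (-(σ * q)) :=
      Real.rpow_nonneg (by positivity) _
    have hpen : ENNReal.ofReal ((M * δ₀) * ((2:ℝ) ^ k * ℓ) *
        (1 + ‖(2:ℝ) ^ k • (z - t) - y‖) ^ (-(σ * q + 1))) =
        K * ENNReal.ofReal ((1 + ‖(2:ℝ) ^ k • (z - t) - y‖) ^ (-(σ * q + 1))) := by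
      rw [hKdef, ENNReal.ofReal_mul (by positivity), ENNReal.ofReal_mul (mul_nonneg hM0 hδ0)]
    constructor
    · calc ENNReal.ofReal ((1 + ‖(2:ℝ) ^ k • (z - t) - y‖) ^ (-(σ * q)))
          ≤ ENNReal.ofReal ((1 + ‖(2:ℝ) ^ k • (u - t) - y‖) ^ (-(σ * q)) +
              (M * δ₀) * ((2:ℝ) ^ k * ℓ) *
                (1 + ‖(2:ℝ) ^ k • (z - t) - y‖) ^ (-(σ * q + 1))) :=
            ENNReal.ofReal_le_ofReal h1
        _ = _ := by rw [ENNReal.ofReal_add hWnn' (by positivity), hpen]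
    · calc ENNReal.ofReal ((1 + ‖(2:ℝ) ^ k • (u - t) - y‖) ^ (-(σ * q)))
          ≤ ENNReal.ofReal ((1 + ‖(2:ℝ) ^ k • (z - t) - y‖) ^ (-(σ * q)) +
              (M * δ₀) * ((2:ℝ) ^ k * ℓ) *
                (1 + ‖(2:ℝ) ^ k • (z - t) - y‖) ^ (-(σ * q + 1))) :=
            ENNReal.ofReal_le_ofReal h2
        _ = _ := by rw [ENNReal.ofReal_add hWnn'' (by positivity), hpen]
  -- integral comparison
  have hint : ∀ (x₁ x₂ : EuclideanSpace ℝ (Fin n)),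
      (∀ t, ENNReal.ofReal ((1 + ‖(2:ℝ) ^ k • (x₁ - t) - y‖) ^ (-(σ * q))) ≤
        ENNReal.ofReal ((1 + ‖(2:ℝ) ^ k • (x₂ - t) - y‖) ^ (-(σ * q))) +
          K * ENNReal.ofReal ((1 + ‖(2:ℝ) ^ k • (z - t) - y‖) ^ (-(σ * q + 1)))) →
      (∫⁻ t, f t ^ q * ENNReal.ofReal ((1 + ‖(2:ℝ) ^ k • (x₁ - t) - y‖) ^ (-(σ * q)))) ≤
        (∫⁻ t, f t ^ q * ENNReal.ofReal ((1 + ‖(2:ℝ) ^ k • (x₂ - t) - y‖) ^ (-(σ * q)))) +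
          K * ∫⁻ t, f t ^ q *
            ENNReal.ofReal ((1 + ‖(2:ℝ) ^ k • (z - t) - y‖) ^ (-(σ * q + 1))) := by
    intro x₁ x₂ hpt
    calc (∫⁻ t, f t ^ q * ENNReal.ofReal ((1 + ‖(2:ℝ) ^ k • (x₁ - t) - y‖) ^ (-(σ * q))))
        ≤ ∫⁻ t, (f t ^ q * ENNReal.ofReal ((1 + ‖(2:ℝ) ^ k • (x₂ - t) - y‖) ^ (-(σ * q))) +
            K * (f t ^ q *
              ENNReal.ofReal ((1 + ‖(2:ℝ) ^ k • (z - t) - y‖) ^ (-(σ * q + 1))))) := by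
          refine lintegral_mono fun t => ?_
          calc f t ^ q * ENNReal.ofReal ((1 + ‖(2:ℝ) ^ k • (x₁ - t) - y‖) ^ (-(σ * q)))
              ≤ f t ^ q *
                (ENNReal.ofReal ((1 + ‖(2:ℝ) ^ k • (x₂ - t) - y‖) ^ (-(σ * q))) +
                  K * ENNReal.ofReal ((1 + ‖(2:ℝ) ^ k • (z - t) - y‖) ^ (-(σ * q + 1)))) :=
              mul_le_mul_right (hpt t) _
            _ = _ := by ring
      _ = _ := by
          rw [lintegral_add_left (hwm x₂ (-(σ * q))),
            lintegral_const_mul K (hwm z (-(σ * q + 1)))]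
  have claim1 := hint z u (fun t => (hof t).1)
  have claim2 := hint u z (fun t => (hof t).2)
  -- assemble
  have hCoe : (((M * δ₀).toNNReal : ℝ≥0) : ℝ≥0∞) = ENNReal.ofReal (M * δ₀) := rfl
  rw [hCoe]
  set cpow : ℝ≥0∞ := (2 : ℝ≥0∞) ^ (k * (n : ℤ)) with hcdef
  set Xz := ∫⁻ t, f t ^ q *
      ENNReal.ofReal ((1 + ‖(2:ℝ) ^ k • (z - t) - y‖) ^ (-(σ * q))) with hXz
  set Xu := ∫⁻ t, f t ^ q *
      ENNReal.ofReal ((1 + ‖(2:ℝ) ^ k • (u - t) - y‖) ^ (-(σ * q))) with hXu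
  set X' := ∫⁻ t, f t ^ q *
      ENNReal.ofReal ((1 + ‖(2:ℝ) ^ k • (z - t) - y‖) ^ (-(σ * q + 1))) with hX'
  refine max_le ?_ ?_ <;> rw [tsub_le_iff_right]
  · calc cpow * Xz ≤ cpow * (Xu + K * X') := mul_le_mul_right claim1 _
      _ = ENNReal.ofReal (M * δ₀) * ENNReal.ofReal ((2:ℝ) ^ k * ℓ) * (cpow * X') +
          cpow * Xu := by rw [hKdef]; ring
  · calc cpow * Xu ≤ cpow * (Xz + K * X') := mul_le_mul_right claim2 _
      _ = ENNReal.ofReal (M * δ₀) * ENNReal.ofReal ((2:ℝ) ^ k * ℓ) * (cpow * X') +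
          cpow * Xz := by rw [hKdef]; ring
end

section
/- Let $0 < p < \infty$, let $y \in \mathbb{R}^n$ with $|y| > 10e$, and let $\eta$ be a nonnegative Schwartz function with $\eta(x) \ge c > 0$ for $|x| \le 1/100$. For integers $1 \le m \le \ln(e+|y|)$, the balls $B_m := \{x : |x - 2^{-m} y| \le 1/100\}$ are pairwise disjoint, and consequently $\big\|\sup_{1 \le k \le \ln(e+|y|)} \eta(\cdot - 2^{-k} y)\big\|_{L^p(\mathbb{R}^n)} \ge c' \,(\ln(e+|y|))^{1/p}$ for a constant $c' > 0$ depending only on $c$, $n$, $p$. -/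
/-!
For `m < m' ≤ L` the centres `2^{-m} y` and `2^{-m'} y` are at distance at least
`2^{-m-1}‖y‖ ≥ 2^{-L-1}‖y‖`, and with `L = ⌊ln(e + ‖y‖)⌋` we have `2^L ≤ e^L ≤ e + ‖y‖ < 1.1‖y‖`,
so this distance exceeds `2/100` and the balls `B_m` are disjoint. On `B_m` the supremum is at least
`η(x - 2^{-m} y) ≥ c`, so the `L^p` norm is at least `c (L · |B_0|)^{1/p}`, and `L ≥ ln(e + ‖y‖)/2`.
-/

open Real MeasureTheory ENNReal NNReal Metric

lemma Nat.half_le_floor {x : ℝ} (hx : 1 ≤ x) : x / 2 ≤ ⌊x⌋₊ := by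
  have := Nat.lt_floor_add_one x
  have : (1 : ℝ) ≤ ⌊x⌋₊ := by exact_mod_cast Nat.one_le_floor_iff x |>.2 hx
  linarith

lemma two_pow_floor_log_le {s : ℝ} (hs : 1 ≤ s) : (2 : ℝ) ^ ⌊log s⌋₊ ≤ s := by
  have h2e : (2 : ℝ) ≤ exp 1 := by linarith [add_one_le_exp 1]
  calc (2 : ℝ) ^ ⌊log s⌋₊ ≤ exp 1 ^ ⌊log s⌋₊ := by gcongr
    _ = exp ⌊log s⌋₊ := by rw [← exp_nat_mul, mul_one]
    _ ≤ exp (log s) := exp_le_exp.2 (Nat.floor_le (log_nonneg hs))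
    _ = s := exp_log (by linarith)

lemma one_le_log_exp_one_add {t : ℝ} (ht : 0 ≤ t) : 1 ≤ log (exp 1 + t) :=
  (le_log_iff_exp_le (by positivity)).2 (by linarith)

lemma lt_two_zpow_neg_floor_log_mul {t : ℝ} (ht : 10 * exp 1 < t) :
    4 * (1 / 100) < (2 : ℝ) ^ (-(⌊log (exp 1 + t)⌋₊ : ℤ)) * t := by
  have he : 0 < exp 1 := exp_pos 1
  have hpow := two_pow_floor_log_le (s := exp 1 + t) (by linarith [add_one_le_exp 1])
  rw [zpow_neg, zpow_natCast, inv_mul_eq_div, lt_div_iff₀ (by positivity)]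
  nlinarith

lemma ofReal_toReal_div_two_mul_le_floor_mul {x : ℝ} (hx : 1 ≤ x) {a : ℝ≥0∞} (ha : a ≠ ⊤) :
    ENNReal.ofReal (a.toReal / 2 * x) ≤ ⌊x⌋₊ * a := by
  calc ENNReal.ofReal (a.toReal / 2 * x) ≤ ENNReal.ofReal (⌊x⌋₊ * a.toReal) := by
        refine ofReal_le_ofReal ?_
        nlinarith [Nat.half_le_floor hx, toReal_nonneg (a := a)]
    _ = ⌊x⌋₊ * a := by rw [ENNReal.ofReal_mul (by positivity), ofReal_natCast, ofReal_toReal ha]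

section DyadicBalls

variable {E : Type*} [SeminormedAddCommGroup E] [NormedSpace ℝ E]

lemma disjoint_closedBall_two_zpow_smul {y : E} {r : ℝ} {m m' L : ℕ} (hmm' : m < m')
    (hmL : m ≤ L) (h : 4 * r < (2 : ℝ) ^ (-(L : ℤ)) * ‖y‖) :
    Disjoint (closedBall ((2 : ℝ) ^ (-(m : ℤ)) • y) r)
      (closedBall ((2 : ℝ) ^ (-(m' : ℤ)) • y) r) := by
  apply closedBall_disjoint_closedBall
  have hm' : (2 : ℝ) ^ (-(m' : ℤ)) ≤ (2 : ℝ) ^ (-(m : ℤ)) / 2 := by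
    rw [div_eq_mul_inv, ← zpow_sub_one₀ (two_ne_zero' ℝ)]
    exact zpow_le_zpow_right₀ one_le_two (by omega)
  have hL : (2 : ℝ) ^ (-(L : ℤ)) ≤ (2 : ℝ) ^ (-(m : ℤ)) :=
    zpow_le_zpow_right₀ one_le_two (by omega)
  have hm'_pos : 0 < (2 : ℝ) ^ (-(m' : ℤ)) := zpow_pos two_pos _
  rw [dist_eq_norm, ← sub_smul, norm_smul, norm_of_nonneg (by linarith)]
  nlinarith [norm_nonneg y]

lemma pairwiseDisjoint_closedBall_two_zpow_smul {y : E} {r : ℝ} {L : ℕ}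
    (h : 4 * r < (2 : ℝ) ^ (-(L : ℤ)) * ‖y‖) :
    (Set.Iic L).PairwiseDisjoint fun m : ℕ => closedBall ((2 : ℝ) ^ (-(m : ℤ)) • y) r := by
  intro m hm m' hm' hne
  rcases hne.lt_or_gt with hlt | hlt
  · exact disjoint_closedBall_two_zpow_smul hlt hm h
  · exact (disjoint_closedBall_two_zpow_smul hlt hm' h).symm

end DyadicBalls

lemma addHaar_biUnion_closedBall {E ι : Type*} [NormedAddCommGroup E] [NormedSpace ℝ E]
    [MeasurableSpace E] [BorelSpace E] [FiniteDimensional ℝ E] (μ : Measure E) [μ.IsAddHaarMeasure]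
    {s : Finset ι} {x : ι → E} {r : ℝ}
    (hs : (s : Set ι).PairwiseDisjoint fun i => closedBall (x i) r) :
    μ (⋃ i ∈ s, closedBall (x i) r) = s.card * μ (closedBall 0 r) := by
  rw [measure_biUnion_finset hs fun _ _ => measurableSet_closedBall]
  simp only [Measure.addHaar_closedBall_center μ, Finset.sum_const, nsmul_eq_mul]

-- For `j ∉ s` the inner supremum is `sSup ∅ = 0`, hence the nonnegativity hypothesis.
lemma le_ciSup_finset_of_nonneg {ι : Type*} {s : Finset ι} {f : ι → ℝ} {i : ι} (hi : i ∈ s)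
    (hf : 0 ≤ f i) : f i ≤ ⨆ j ∈ s, f j := by
  rw [s.ciSup_eq_max'_image f ⟨i, hi, by rwa [Real.sSup_empty]⟩
    (Finset.image_nonempty.2 ⟨i, hi⟩)]
  exact Finset.le_max' _ _ (Finset.mem_image_of_mem f hi)

lemma ofReal_mul_measure_rpow_le_eLpNorm {α : Type*} [MeasurableSpace α] {μ : Measure α}
    {f : α → ℝ} {S : Set α} {c : ℝ} {p : ℝ≥0∞} (hS : MeasurableSet S) (hc : 0 ≤ c)
    (hf : ∀ x ∈ S, c ≤ f x) (hp : p ≠ 0) (hp_top : p ≠ ⊤) :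
    ENNReal.ofReal c * μ S ^ (1 / p.toReal) ≤ eLpNorm f p μ := by
  rw [← Real.enorm_of_nonneg hc, ← eLpNorm_indicator_const hS hp hp_top]
  refine eLpNorm_mono fun x => ?_
  by_cases hx : x ∈ S
  · simpa [hx, abs_of_nonneg hc] using (hf x hx).trans (le_abs_self _)
  · simp [hx]

/-- the balls `B_m = {|x - 2^{-m} y| ≤ 1/100}`, `1 ≤ m ≤ ln(e+|y|)`, are
pairwise disjoint, and the `L^p` norm of `sup_{1 ≤ k ≤ ln(e+|y|)} η(· - 2^{-k} y)` is at
least `c' (ln(e+|y|))^{1/p}` when `η ≥ c > 0` on the ball of radius `1/100`. -/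
theorem disjoint_balls_sup_lower_bound (n : ℕ) (p c : ℝ) (hp : 0 < p) (hc : 0 < c) :
    ∃ c' : ℝ, 0 < c' ∧ ∀ (y : EuclideanSpace ℝ (Fin n)) (η : EuclideanSpace ℝ (Fin n) → ℝ),
      ‖y‖ > 10 * Real.exp 1 → (∀ x, 0 ≤ η x) → (∀ x, ‖x‖ ≤ 1 / 100 → c ≤ η x) →
      ((∀ m ∈ Finset.Icc 1 ⌊Real.log (Real.exp 1 + ‖y‖)⌋₊,
          ∀ m' ∈ Finset.Icc 1 ⌊Real.log (Real.exp 1 + ‖y‖)⌋₊, m ≠ m' →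
          Disjoint (Metric.closedBall ((2 : ℝ) ^ (-(m : ℤ)) • y) (1 / 100))
            (Metric.closedBall ((2 : ℝ) ^ (-(m' : ℤ)) • y) (1 / 100))) ∧
        ENNReal.ofReal (c' * Real.log (Real.exp 1 + ‖y‖) ^ (1 / p))
          ≤ eLpNorm
              (fun x => ⨆ k ∈ Finset.Icc 1 ⌊Real.log (Real.exp 1 + ‖y‖)⌋₊,
                η (x - (2 : ℝ) ^ (-(k : ℤ)) • y))
              (ENNReal.ofReal p) volume) := by
  set v := volume (closedBall (0 : EuclideanSpace ℝ (Fin n)) (1 / 100))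
  have hv : v ≠ ⊤ := measure_closedBall_lt_top.ne
  have hv0 : 0 < v.toReal := toReal_pos (measure_closedBall_pos _ _ (by norm_num)).ne' hv
  refine ⟨c * (v.toReal / 2) ^ (1 / p), by positivity, fun y η hy _ hηc => ?_⟩
  set L' := log (exp 1 + ‖y‖)
  set L := ⌊L'⌋₊
  have hL' : 1 ≤ L' := one_le_log_exp_one_add (norm_nonneg y)
  have hdisj : (↑(Finset.Icc 1 L) : Set ℕ).PairwiseDisjoint
      fun m : ℕ => closedBall ((2 : ℝ) ^ (-(m : ℤ)) • y) (1 / 100) :=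
    (pairwiseDisjoint_closedBall_two_zpow_smul (lt_two_zpow_neg_floor_log_mul hy)).subset
      fun m hm => (Finset.mem_Icc.1 hm).2
  refine ⟨hdisj, ?_⟩
  have hsup : ∀ x ∈ ⋃ m ∈ Finset.Icc 1 L, closedBall ((2 : ℝ) ^ (-(m : ℤ)) • y) (1 / 100),
      c ≤ ⨆ k ∈ Finset.Icc 1 L, η (x - (2 : ℝ) ^ (-(k : ℤ)) • y) := by
    simp only [Set.mem_iUnion, mem_closedBall, dist_eq_norm]
    rintro x ⟨m, hm, hx⟩
    exact (hηc _ hx).trans <| le_ciSup_finset_of_nonneg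
      (f := fun k : ℕ => η (x - (2 : ℝ) ^ (-(k : ℤ)) • y)) hm (hc.le.trans (hηc _ hx))
  calc ENNReal.ofReal (c * (v.toReal / 2) ^ (1 / p) * L' ^ (1 / p))
      = ENNReal.ofReal c * ENNReal.ofReal (v.toReal / 2 * L') ^ (1 / p) := by
        rw [mul_assoc, ← mul_rpow (by positivity) (by positivity), ENNReal.ofReal_mul hc.le,
          ofReal_rpow_of_nonneg (by positivity) (by positivity)]
    _ ≤ ENNReal.ofReal c * ((Finset.Icc 1 L).card * v) ^ (1 / (ENNReal.ofReal p).toReal) := by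
      rw [toReal_ofReal hp.le, Nat.card_Icc, Nat.add_sub_cancel]
      gcongr
      exact ofReal_toReal_div_two_mul_le_floor_mul hL' hv
    _ ≤ _ := by
      rw [← addHaar_biUnion_closedBall volume hdisj]
      exact ofReal_mul_measure_rpow_le_eLpNorm
        (Finset.measurableSet_biUnion _ fun _ _ => measurableSet_closedBall) hc.le hsup
        (by simpa using hp) ofReal_ne_top
end
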